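/- Let A ∈ ℝ and c ∈ ℝ with c ≠ 0. Suppose θ, x : [0,∞) → ℝ are differentiable and satisfy ẋ(t) + A cos(θ(t)) · θ̇(t) = c for all t ≥ 0. Then |x(t)| → ∞ as t → ∞; in fact x(t) = x(0) + c t − A (sin θ(t) − sin θ(0)) for all t ≥ 0. -/
import Mathlib


/-!
Statement 15: if `ẋ + A cos(θ) θ̇ = c ≠ 0` for all `t ≥ 0`, then
`x(t) = x(0) + c t − A (sin θ(t) − sin θ(0))` and `|x(t)| → ∞`.
-/

open Real Set Filter

theorem statement15 (A c : ℝ) (hc : c ≠ 0) (θ x : ℝ → ℝ)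
    (hθ : ∀ t ∈ Ici (0 : ℝ), DifferentiableAt ℝ θ t)
    (hx : ∀ t ∈ Ici (0 : ℝ), DifferentiableAt ℝ x t)
    (hcons : ∀ t ∈ Ici (0 : ℝ),
      deriv x t + A * Real.cos (θ t) * deriv θ t = c) :
    Tendsto (fun t => |x t|) atTop atTop ∧
    ∀ t ∈ Ici (0 : ℝ),
      x t = x 0 + c * t - A * (Real.sin (θ t) - Real.sin (θ 0)) := by
  set f : ℝ → ℝ := fun t => x t + A * Real.sin (θ t) - c * t with hf
  have hfd : ∀ t ∈ Ici (0 : ℝ), HasDerivAt f 0 t := by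
    intro t ht
    have h1 : HasDerivAt x (deriv x t) t := (hx t ht).hasDerivAt
    have h2 : HasDerivAt (fun s => Real.sin (θ s))
        (Real.cos (θ t) * deriv θ t) t :=
      (Real.hasDerivAt_sin (θ t)).comp t (hθ t ht).hasDerivAt
    have hid : HasDerivAt (fun s : ℝ => c * s) c t := by
      simpa using (hasDerivAt_id t).const_mul c
    have h3 : HasDerivAt f
        (deriv x t + A * (Real.cos (θ t) * deriv θ t) - c) t :=
      (h1.add (h2.const_mul A)).sub hid
    convert h3 using 1
    linarith [hcons t ht]
  have key : ∀ t ∈ Ici (0 : ℝ), f t = f 0 := by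
    intro t ht
    have hd : ∀ s ∈ Ico (0 : ℝ) t, HasDerivWithinAt f 0 (Ici s) s := fun s hs =>
      (hfd s hs.1).hasDerivWithinAt
    exact constant_of_has_deriv_right_zero
      (fun s hs => ((hfd s hs.1).continuousAt.continuousWithinAt)) hd t ⟨ht, le_refl t⟩
  have hform : ∀ t ∈ Ici (0 : ℝ),
      x t = x 0 + c * t - A * (Real.sin (θ t) - Real.sin (θ 0)) := by
    intro t ht
    have := key t ht
    simp only [hf] at this
    nlinarith [this]
  refine ⟨?_, hform⟩
  have hlb : ∀ᶠ t in atTop, |c| * t - (|x 0| + 2 * |A|) ≤ |x t| := by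
    filter_upwards [eventually_ge_atTop (0:ℝ)] with t ht
    have h := hform t ht
    have hsin : |Real.sin (θ t) - Real.sin (θ 0)| ≤ 2 := by
      have := abs_sub (Real.sin (θ t)) (Real.sin (θ 0))
      calc |Real.sin (θ t) - Real.sin (θ 0)|
          ≤ |Real.sin (θ t)| + |Real.sin (θ 0)| := abs_sub _ _
        _ ≤ 1 + 1 := add_le_add (Real.abs_sin_le_one _) (Real.abs_sin_le_one _)
        _ = 2 := by norm_num
    have h1 : |c * t| ≤ |x t| + |x 0| + |A * (Real.sin (θ t) - Real.sin (θ 0))| := by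
      have : c * t = x t - x 0 + A * (Real.sin (θ t) - Real.sin (θ 0)) := by
        linarith
      rw [this]
      calc |x t - x 0 + A * (Real.sin (θ t) - Real.sin (θ 0))|
          ≤ |x t - x 0| + |A * (Real.sin (θ t) - Real.sin (θ 0))| := abs_add_le _ _
        _ ≤ |x t| + |x 0| + |A * (Real.sin (θ t) - Real.sin (θ 0))| := by
            have := abs_sub (x t) (x 0); linarith [abs_sub (x t) (x 0)]
    have h2 : |A * (Real.sin (θ t) - Real.sin (θ 0))| ≤ 2 * |A| := by
      rw [abs_mul]
      calc |A| * |Real.sin (θ t) - Real.sin (θ 0)| ≤ |A| * 2 :=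
            mul_le_mul_of_nonneg_left hsin (abs_nonneg A)
        _ = 2 * |A| := by ring
    have h3 : |c * t| = |c| * t := by rw [abs_mul, abs_of_nonneg ht]
    linarith [h1, h2, h3.symm ▸ h1]
  have hcpos : 0 < |c| := abs_pos.mpr hc
  have hlin : Tendsto (fun t => |c| * t - (|x 0| + 2 * |A|)) atTop atTop := by
    have h := tendsto_id.atTop_mul_const hcpos
    have := tendsto_atTop_add_const_right atTop (-(|x 0| + 2 * |A|)) h
    refine this.congr fun t => by simp [id]; ring
  exact tendsto_atTop_mono' atTop hlb hlin
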